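/- Let η be a substitution, u a two-sided periodic point with growing seed s and period p, and let w be a word accepted by A_{η,s}. If w = 0·v then A_{η,s}(w) = A_{η,s}(0 · (W_min)^i · v) for every i ≥ 0, and if w = 1·v then A_{η,s}(w) = A_{η,s}(1 · (W_max)^i · v) for every i ≥ 0. (Thus W_min and W_max are neutral padding words.) -/
import Mathlib


open Filter List

variable {A : Type*}

/-- A substitution applied to a word: concatenation of the images of its letters. -/
def substW (η : A → List A) (w : List A) : List A := (w.map η).flatten

/-- The `k`-th iterate of a substitution applied to a word. -/
def iterW (η : A → List A) (k : ℕ) (w : List A) : List A := (substW η)^[k] w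

/-- `η` is a substitution: nonempty images and at least one growing letter. -/
def IsSubstitution (η : A → List A) : Prop :=
  (∀ c, η c ≠ []) ∧ ∃ a, Tendsto (fun k => (iterW η k [a]).length) atTop atTop

/-- `(m i, a i)` for `i = 0, …, len-1` is an `x`-admissible sequence:
`m (i) ++ [a i]` is a prefix of `η (a (i+1))` and `m (len-1) ++ [a (len-1)]`
is a prefix of `η x`. -/
def AdmSeq (η : A → List A) (len : ℕ) (m : ℕ → List A) (a : ℕ → A) (x : A) : Prop :=
  (∀ i, i + 1 < len → (m i ++ [a i]) <+: η (a (i + 1))) ∧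
  (1 ≤ len → (m (len - 1) ++ [a (len - 1)]) <+: η x)

/-- `Σ_{j<k} |η^j(m_j)|`. -/
def sumLen (η : A → List A) (k : ℕ) (m : ℕ → List A) : ℕ :=
  ∑ j ∈ Finset.range k, (iterW η j (m j)).length

/-- `η^{k-1}(m_{k-1}) η^{k-2}(m_{k-2}) ⋯ η^0(m_0)`. -/
def concatDT (η : A → List A) (k : ℕ) (m : ℕ → List A) : List A :=
  ((List.range k).reverse.map (fun j => iterW η j (m j))).flatten

/-- The digit word `|m_{k-1}| ⊙ |m_{k-2}| ⊙ ⋯ ⊙ |m_0|`. -/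
def dtDigits (k : ℕ) (m : ℕ → List A) : List ℕ :=
  (List.range k).reverse.map (fun j => (m j).length)

/-- Partial run of the automaton `A_{η,x}`: from state `x`, the digit `d`
moves to the `d`-th letter of `η x` when `d < |η x|`. -/
def run (η : A → List A) : List ℕ → A → Option A
  | [], x => some x
  | d :: w, x => if h : d < (η x).length then run η w ((η x)[d]) else none

/-- `u` restricted to nonnegative positions is a periodic point of `η` of period `p`:
every `η^p`-image of a prefix of `u` is again a prefix of `u`. -/
def RightPer (η : A → List A) (p : ℕ) (u : ℤ → A) : Prop :=
  ∀ n : ℕ, ∀ j : ℕ, j < (iterW η p (List.ofFn (fun i : Fin (n+1) => u i))).length →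
    (iterW η p (List.ofFn (fun i : Fin (n+1) => u i)))[j]? = some (u j)

/-- `u` restricted to negative positions is a periodic point of `η` of period `p`:
every `η^p`-image of a suffix `u_{-(n+1)} ⋯ u_{-1}` of the left part is again a
suffix of the left part of `u`. -/
def LeftPer (η : A → List A) (p : ℕ) (u : ℤ → A) : Prop :=
  ∀ n : ℕ, ∀ j : ℕ,
    j < (iterW η p (List.ofFn (fun i : Fin (n+1) => u ((i : ℤ) - (n+1))))).length →
    (iterW η p (List.ofFn (fun i : Fin (n+1) => u ((i : ℤ) - (n+1)))))[j]? =
      some (u ((j : ℤ) -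
        (iterW η p (List.ofFn (fun i : Fin (n+1) => u ((i : ℤ) - (n+1))))).length))

/-- `u : ℤ → A` is a two-sided periodic point of `η` of period `p ≥ 1` with
growing seed `u₋₁ | u₀`. -/
def TwoSidedPerPoint (η : A → List A) (p : ℕ) (u : ℤ → A) : Prop :=
  1 ≤ p ∧ RightPer η p u ∧ LeftPer η p u ∧
  Tendsto (fun k => (iterW η k [u 0]).length) atTop atTop ∧
  Tendsto (fun k => (iterW η k [u (-1)]).length) atTop atTop

/-- The Dumont–Thomas decomposition data of a positive integer `n` with respect to
the letter `x` (Theorem of Dumont–Thomas for the right-infinite part):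
`p ∣ k`, `p ≤ k`, the sequence is `x`-admissible, `m_{k-1} ⋯ m_{k-p} ≠ ε` and
`Σ_{j<k} |η^j(m_j)| = n`. -/
def PosSpec (η : A → List A) (p : ℕ) (x : A) (n : ℤ) (k : ℕ) (m : ℕ → List A)
    (a : ℕ → A) : Prop :=
  p ∣ k ∧ p ≤ k ∧ AdmSeq η k m a x ∧ (∃ i, i < p ∧ m (k - 1 - i) ≠ []) ∧
  (sumLen η k m : ℤ) = n

/-- The Dumont–Thomas decomposition data of an integer `n ≤ -2` with respect to
the letter `b` (Theorem of Dumont–Thomas for the left-infinite part). -/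
def NegSpec (η : A → List A) (p : ℕ) (b : A) (n : ℤ) (k : ℕ) (m : ℕ → List A)
    (a : ℕ → A) : Prop :=
  p ∣ k ∧ p ≤ k ∧ AdmSeq η k m a b ∧
  ((List.range p).map (fun i => iterW η (p - 1 - i) (m (k - 1 - i)))).flatten
      ++ [a (k - p)] ≠ iterW η p [b] ∧
  (sumLen η k m : ℤ) = n + (iterW η k [b]).length

/-- `w` is the Dumont–Thomas complement representation `rep_u(n)` of `n ∈ ℤ`. -/
def RepSpec (η : A → List A) (p : ℕ) (u : ℤ → A) (n : ℤ) (w : List ℕ) : Prop :=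
  (n = 0 ∧ w = [0]) ∨ (n = -1 ∧ w = [1]) ∨
  (1 ≤ n ∧ ∃ k m a, PosSpec η p (u 0) n k m a ∧ w = 0 :: dtDigits k m) ∨
  (n ≤ -2 ∧ ∃ k m a, NegSpec η p (u (-1)) n k m a ∧ w = 1 :: dtDigits k m)

/-- Run of the automaton `A_{η,s}` with initial state `start`: the first digit
`0` (resp. `1`) moves to `u 0` (resp. `u (-1)`). -/
def runSeed (η : A → List A) (u : ℤ → A) : List ℕ → Option A
  | [] => none
  | d :: w => if d = 0 then run η w (u 0) else if d = 1 then run η w (u (-1)) else none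

/-- `|η^{k-p-1}(m_{k-1}) ⋯ η^0(m_p)|`, the `u`-quotient of a positive integer. -/
def uQuotPos (η : A → List A) (p k : ℕ) (m : ℕ → List A) : ℤ :=
  ∑ j ∈ Finset.range (k - p), ((iterW η j (m (j + p))).length : ℤ)

/-- `w = tail_{η,p,x}(n)`: the digit word of the unique `x`-admissible sequence of
length `p` whose length-sum is `n`. -/
def TailSpec (η : A → List A) (p : ℕ) (x : A) (n : ℕ) (w : List ℕ) : Prop :=
  ∃ m a, AdmSeq η p m a x ∧ sumLen η p m = n ∧ w = dtDigits p m

/-- Radix order: shorter words first, ties broken lexicographically. -/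
def radLt (v w : List ℕ) : Prop :=
  v.length < w.length ∨ (v.length = w.length ∧ List.Lex (· < ·) v w)

/-- Reversed-radix order: longer words first, ties broken lexicographically. -/
def revLt (v w : List ℕ) : Prop :=
  w.length < v.length ∨ (v.length = w.length ∧ List.Lex (· < ·) v w)

/-- The total order `≺` on `{0,1}D*`. -/
def precLt (v w : List ℕ) : Prop :=
  (v.head? = some 1 ∧ w.head? = some 0) ∨
  (v.head? = some 0 ∧ w.head? = some 0 ∧ radLt v w) ∨
  (v.head? = some 1 ∧ w.head? = some 1 ∧ revLt v w)

/-- The base-2 value `Σ_{i<k} w_i 2^i` of the word `w = w_{k-1} ⋯ w_0`. -/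
def natVal2 (w : List ℕ) : ℕ := w.foldl (fun acc d => 2 * acc + d) 0

/-- The two's complement value `Σ_{i<k} w_i 2^i − w_{k-1} 2^k`. -/
def val2c (w : List ℕ) : ℤ := (natVal2 w : ℤ) - (w.headI : ℤ) * 2 ^ w.length

/-- Fibonacci numbers with `F 0 = 1`, `F 1 = 2`. -/
def fib2 : ℕ → ℕ
  | 0 => 1
  | 1 => 2
  | n + 2 => fib2 (n + 1) + fib2 n

/-- The Fibonacci complement value `Σ_{i<k} w_i F_i − w_{k-1} F_k`
of the word `w = w_{k-1} ⋯ w_0`. -/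
def valFc (w : List ℕ) : ℤ :=
  (∑ i ∈ Finset.range w.length, (w.reverse.getD i 0 : ℤ) * fib2 i) -
    (w.headI : ℤ) * fib2 w.length


section Helpers

variable (η : A → List A)

lemma substW_append (v w : List A) : substW η (v ++ w) = substW η v ++ substW η w := by
  simp [substW]

lemma iterW_nil (k : ℕ) : iterW η k ([] : List A) = [] := by
  induction k with
  | zero => rfl
  | succ k ih => rw [iterW, Function.iterate_succ_apply]; exact ih

lemma iterW_succ' (k : ℕ) (w : List A) :
    iterW η (k + 1) w = iterW η k (substW η w) := by
  rw [iterW, Function.iterate_succ_apply]; rfl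

lemma iterW_append (k : ℕ) (v w : List A) :
    iterW η k (v ++ w) = iterW η k v ++ iterW η k w := by
  induction k generalizing v w with
  | zero => rfl
  | succ k ih => rw [iterW_succ', substW_append, ih, iterW_succ', iterW_succ']

lemma substW_ne_nil (hne : ∀ c, η c ≠ []) {w : List A} (hw : w ≠ []) :
    substW η w ≠ [] := by
  cases w with
  | nil => exact absurd rfl hw
  | cons c t =>
    simp only [substW, List.map_cons, List.flatten_cons, ne_eq, List.append_eq_nil_iff]
    intro h
    exact hne c h.1

lemma iterW_ne_nil (hne : ∀ c, η c ≠ []) (k : ℕ) {w : List A} (hw : w ≠ []) :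
    iterW η k w ≠ [] := by
  induction k generalizing w with
  | zero => exact hw
  | succ k ih => rw [iterW_succ']; exact ih (substW_ne_nil η hne hw)

lemma substW_singleton (x : A) : substW η [x] = η x := by simp [substW]

lemma run_append (w₁ w₂ : List ℕ) (x : A) :
    run η (w₁ ++ w₂) x = (run η w₁ x).bind (run η w₂) := by
  induction w₁ generalizing x with
  | nil => rfl
  | cons d w ih =>
    simp only [List.cons_append, run]
    by_cases h : d < (η x).length
    · simp [h, ih]
    · simp [h]

lemma run_cons_of_getElem? {x y : A} {d : ℕ} (h : (η x)[d]? = some y) (w : List ℕ) :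
    run η (d :: w) x = run η w y := by
  obtain ⟨hd, hy⟩ := List.getElem?_eq_some_iff.1 h
  simp [run, hd, hy]

lemma prefix_getElem? {m : List A} {a : A} {l : List A} (h : m ++ [a] <+: l) :
    l[m.length]? = some a := by
  obtain ⟨t, rfl⟩ := h
  rw [List.append_assoc, List.getElem?_append_right (le_refl _)]
  simp

lemma dtDigits_succ (k : ℕ) (m : ℕ → List A) :
    dtDigits (k + 1) m = (m k).length :: dtDigits k m := by
  simp [dtDigits, List.range_succ]

lemma sumLen_succ (k : ℕ) (m : ℕ → List A) :
    sumLen η (k + 1) m = sumLen η k m + (iterW η k (m k)).length :=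
  Finset.sum_range_succ _ _

lemma adm_shift {k : ℕ} {m : ℕ → List A} {a : ℕ → A} {x : A}
    (h : AdmSeq η (k + 2) m a x) : AdmSeq η (k + 1) m a (a (k + 1)) := by
  refine ⟨fun i hi => h.1 i (by omega), fun _ => ?_⟩
  simpa using h.1 k (by omega)

lemma run_adm (hne : ∀ c, η c ≠ []) :
    ∀ (k : ℕ) (m : ℕ → List A) (a : ℕ → A) (x : A), AdmSeq η (k + 1) m a x →
    run η (dtDigits (k + 1) m) x = some (a 0) ∧
    (iterW η (k + 1) [x])[sumLen η (k + 1) m]? = some (a 0) := by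
  intro k
  induction k with
  | zero =>
    intro m a x h
    have hpre : m 0 ++ [a 0] <+: η x := h.2 (by norm_num)
    have hget := prefix_getElem? hpre
    constructor
    · rw [dtDigits_succ, run_cons_of_getElem? η hget]
      rfl
    · have : iterW η 1 [x] = η x := by rw [iterW_succ', substW_singleton]; rfl
      rw [this]
      have : sumLen η 1 m = (m 0).length := by
        rw [sumLen_succ]; simp [sumLen]; rfl
      rw [this]; exact hget
  | succ k ih =>
    intro m a x h
    have hpre : m (k + 1) ++ [a (k + 1)] <+: η x := by
      simpa using h.2 (by omega)
    obtain ⟨hrun, hget⟩ := ih m a (a (k + 1)) (adm_shift η h)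
    have hlt : sumLen η (k + 1) m < (iterW η (k + 1) [a (k + 1)]).length :=
      (List.getElem?_eq_some_iff.1 hget).1
    constructor
    · rw [dtDigits_succ, run_cons_of_getElem? η (prefix_getElem? hpre)]
      exact hrun
    · obtain ⟨t, ht⟩ := hpre
      rw [iterW_succ', substW_singleton, ← ht, List.append_assoc,
        iterW_append, iterW_append, sumLen_succ,
        List.getElem?_append_right (Nat.le_add_left _ _), Nat.add_sub_cancel,
        List.getElem?_append_left hlt]
      exact hget

lemma run_flatten_replicate {η : A → List A} {W : List ℕ} {x : A}
    (hW : run η W x = some x) (i : ℕ) (v : List ℕ) :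
    run η ((List.replicate i W).flatten ++ v) x = run η v x := by
  induction i with
  | zero => rfl
  | succ i ih =>
    rw [List.replicate_succ, List.flatten_cons, List.append_assoc,
      run_append, hW, Option.bind_some, ih]

/-- An admissible sequence of length `p` with all `m j = []` and
`a j` the iterated first letter. -/
lemma adm_zeros [Inhabited A] {η : A → List A} (hne : ∀ c, η c ≠ []) (p : ℕ) (hp : 1 ≤ p) (x : A) :
    AdmSeq η p (fun _ => []) (fun j => (fun y => (η y).headI)^[p - j] x) x ∧
    sumLen η p (fun _ => []) = 0 ∧
    dtDigits p (fun (_ : ℕ) => ([] : List A)) = List.replicate p 0 := by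
  have headpre : ∀ y : A, [(η y).headI] <+: η y := by
    intro y
    rcases List.exists_cons_of_ne_nil (hne y) with ⟨c, t, hct⟩
    rw [hct]; exact ⟨t, rfl⟩
  refine ⟨⟨fun i hi => ?_, fun _ => ?_⟩, ?_, ?_⟩
  · simp only [List.nil_append]
    have : p - i = (p - (i + 1)) + 1 := by omega
    rw [this, Function.iterate_succ_apply']
    exact headpre _
  · simp only [List.nil_append]
    have : p - (p - 1) = 1 := by omega
    rw [this, Function.iterate_one]
    exact headpre x
  · simp [sumLen, iterW_nil]
  · simp [dtDigits, List.eq_replicate_iff]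

end Helpers

/-- `W_min = 0^p` and `W_max = tail_{η,p,u₋₁}(|η^p(u₋₁)|−1)`
are neutral padding words: inserting any number of copies after the leading
digit does not change the state reached by `A_{η,s}`. -/
theorem padding_neutral [Finite A] (η : A → List A) (hη : IsSubstitution η)
    (p : ℕ) (u : ℤ → A) (hu : TwoSidedPerPoint η p u) (Wmax : List ℕ)
    (hW : TailSpec η p (u (-1)) ((iterW η p [u (-1)]).length - 1) Wmax) :
    ∀ w : List ℕ, runSeed η u w ≠ none → ∀ (i : ℕ) (v : List ℕ),
      (w = 0 :: v →
        runSeed η u w =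
          runSeed η u (0 :: ((List.replicate i (List.replicate p 0)).flatten ++ v))) ∧
      (w = 1 :: v →
        runSeed η u w =
          runSeed η u (1 :: ((List.replicate i Wmax).flatten ++ v))) := by
  obtain ⟨hp, hRight, hLeft, _, _⟩ := hu
  haveI : Inhabited A := ⟨u 0⟩
  have hne := hη.1
  obtain ⟨q, rfl⟩ : ∃ q, p = q + 1 := ⟨p - 1, by omega⟩
  set p := q + 1
  -- W_min loop: run η (replicate p 0) (u 0) = some (u 0)
  obtain ⟨hadm0, hsum0, hdig0⟩ := adm_zeros (η := η) hne p hp (u 0)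
  obtain ⟨hrun0, hget0⟩ := run_adm η hne q _ _ _ hadm0
  have hofn : (List.ofFn (fun i : Fin 1 => u i)) = [u 0] := by
    simp [List.ofFn_succ]
  have hfirst : (iterW η p [u 0])[0]? = some (u 0) := by
    have hlen : 0 < (iterW η p [u 0]).length :=
      List.length_pos_iff.2 (iterW_ne_nil η hne p (by simp))
    have := hRight 0 0 (by rw [hofn] at *; exact hlen)
    rw [hofn] at this
    simpa using this
  rw [hsum0] at hget0
  have hfix0 : (fun y => (η y).headI)^[p - 0] (u 0) = u 0 := by
    have := hget0.symm.trans hfirst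
    exact Option.some.inj this
  have hrunW0 : run η (List.replicate p 0) (u 0) = some (u 0) := by
    rw [← hdig0, hrun0, hfix0]
  -- W_max loop: run η Wmax (u (-1)) = some (u (-1))
  obtain ⟨m, a, hadm, hsum, hdig⟩ := hW
  obtain ⟨hrunM, hgetM⟩ := run_adm η hne q m a _ hadm
  have hofn' : (List.ofFn (fun i : Fin 1 => u ((i : ℤ) - (((0:ℕ):ℤ) + 1)))) = [u (-1)] := by
    simp [List.ofFn_succ]
  have hlenM : 1 ≤ (iterW η p [u (-1)]).length :=
    List.length_pos_iff.2 (iterW_ne_nil η hne p (by simp))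
  have hlast : (iterW η p [u (-1)])[(iterW η p [u (-1)]).length - 1]? = some (u (-1)) := by
    have := hLeft 0 ((iterW η p (List.ofFn (fun i : Fin 1 => u ((i : ℤ) - (((0:ℕ):ℤ) + 1))))).length - 1)
      (by rw [hofn']; omega)
    rw [hofn'] at this
    have hcast : ((((iterW η p [u (-1)]).length - 1 : ℕ) : ℤ) -
        (iterW η p [u (-1)]).length) = -1 := by
      push_cast [Nat.cast_sub hlenM]
      ring
    rw [hcast] at this
    exact this
  rw [hsum] at hgetM
  have ha0 : a 0 = u (-1) := Option.some.inj (hgetM.symm.trans hlast)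
  have hrunWM : run η Wmax (u (-1)) = some (u (-1)) := by
    rw [hdig, hrunM, ha0]
  -- conclude
  intro w _ i v
  constructor
  · rintro rfl
    show run η v (u 0) = run η _ (u 0)
    rw [run_flatten_replicate hrunW0]
  · rintro rfl
    show run η v (u (-1)) = run η _ (u (-1))
    rw [run_flatten_replicate hrunWM]
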